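/- For m ≥ 2 and ℓ ≥ 1, the power series P(x) = (1 + x + ⋯ + x^{m-1})^{ℓ+1} · ( m·Σ_{k≥1} (mk)^ℓ x^{mk} − Σ_{k≥1} k^ℓ x^k ) is a polynomial; explicitly P(x) = Σ_{j=1}^{m-1} (∏_{1≤i≤m-1, i≠j} (1 - ζ_m^i x)^{ℓ+1}) · A_ℓ(ζ_m^j x), where ζ_m = e^{2πi/m}. -/

import Mathlib

/-!
Over `ℂ` the geometric sum factors as `1 + x + ⋯ + x^{m-1} = ∏_{j=1}^{m-1} (1 - ζ^j x)`, and
orthogonality of the characters `j ↦ ζ^{jn}` filters the second factor into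
`Σ_{j=1}^{m-1} E(ζ^j x)` with `E(x) = Σ n^ℓ x^n`. In the `j`-th summand of the product, the factor
`(1 - ζ^j x)^{ℓ+1}` turns `E(ζ^j x)` into the polynomial `A_ℓ(ζ^j x)`.
-/

open PowerSeries Polynomial Finset

theorem Finset.range_eq_insert_zero_Icc {m : ℕ} (hm : 0 < m) :
    range m = insert 0 (Icc 1 (m - 1)) := by
  ext i
  simp only [mem_range, mem_insert, mem_Icc]
  omega

section CoeToPowerSeries

variable {R ι : Type*} [CommSemiring R]

theorem Polynomial.coe_sum (s : Finset ι) (f : ι → R[X]) :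
    ((∑ i ∈ s, f i : R[X]) : R⟦X⟧) = ∑ i ∈ s, (f i : R⟦X⟧) :=
  map_sum coeToPowerSeries.ringHom f s

theorem Polynomial.coe_prod (s : Finset ι) (f : ι → R[X]) :
    ((∏ i ∈ s, f i : R[X]) : R⟦X⟧) = ∏ i ∈ s, (f i : R⟦X⟧) :=
  map_prod coeToPowerSeries.ringHom f s

theorem Polynomial.coe_comp_C_mul_X (p : R[X]) (c : R) :
    ((p.comp (Polynomial.C c * Polynomial.X) : R[X]) : R⟦X⟧) = rescale c (p : R⟦X⟧) := by
  ext n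
  rw [coeff_rescale, Polynomial.coeff_coe, Polynomial.coeff_coe, comp_C_mul_X_coeff, mul_comm]

end CoeToPowerSeries

namespace IsPrimitiveRoot

variable {R : Type*} [CommRing R] [IsDomain R] {ζ : R} {m : ℕ}

theorem prod_nthRootsFinset_one {M : Type*} [CommMonoid M] (hζ : IsPrimitiveRoot ζ m)
    (f : R → M) : ∏ ω ∈ nthRootsFinset m (1 : R), f ω = ∏ i ∈ range m, f (ζ ^ i) := by
  classical
  rw [nthRootsFinset, ← Multiset.toFinset_eq hζ.nthRoots_one_nodup, Finset.prod_mk,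
    hζ.nthRoots_eq (one_pow m), Multiset.map_map]
  simp [Finset.prod_eq_multiset_prod]

theorem prod_one_sub_C_pow_mul_X (hζ : IsPrimitiveRoot ζ m) (hm : 0 < m) :
    ∏ i ∈ range m, (1 - Polynomial.C (ζ ^ i) * Polynomial.X) = (1 - Polynomial.X ^ m : R[X]) := by
  have hCζ := hζ.map_of_injective (Polynomial.C_injective (R := R))
  rw [← one_pow m, hCζ.pow_sub_pow_eq_prod_sub_mul 1 Polynomial.X hm, hCζ.prod_nthRootsFinset_one]
  simp

theorem geom_sum_X_eq_prod_Icc (hζ : IsPrimitiveRoot ζ m) (hm : 0 < m) :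
    ∑ i ∈ range m, (Polynomial.X : R[X]) ^ i =
      ∏ i ∈ Icc 1 (m - 1), (1 - Polynomial.C (ζ ^ i) * Polynomial.X) := by
  have h1X : (1 - Polynomial.X : R[X]) ≠ 0 := by
    simpa [sub_eq_zero] using (X_ne_C (1 : R)).symm
  apply mul_left_cancel₀ h1X
  rw [mul_neg_geom_sum, ← hζ.prod_one_sub_C_pow_mul_X hm, range_eq_insert_zero_Icc hm,
    prod_insert (by simp)]
  simp

theorem geom_sum_pow_eq_ite (hζ : IsPrimitiveRoot ζ m) (n : ℕ) :
    ∑ j ∈ range m, (ζ ^ n) ^ j = if m ∣ n then (m : R) else 0 := by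
  split_ifs with hmn
  · simp [(hζ.pow_eq_one_iff_dvd n).mpr hmn]
  · have hne : ζ ^ n - 1 ≠ 0 := sub_ne_zero.mpr fun h => hmn ((hζ.pow_eq_one_iff_dvd n).mp h)
    have hmul : (∑ j ∈ range m, (ζ ^ n) ^ j) * (ζ ^ n - 1) = 0 := by
      rw [geom_sum_mul, ← pow_mul, mul_comm, pow_mul, hζ.pow_eq_one, one_pow, sub_self]
    exact (mul_eq_zero.mp hmul).resolve_right hne

theorem sum_Icc_pow_pow (hζ : IsPrimitiveRoot ζ m) (hm : 0 < m) (n : ℕ) :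
    ∑ j ∈ Icc 1 (m - 1), (ζ ^ j) ^ n = (if m ∣ n then (m : R) else 0) - 1 := by
  rw [← hζ.geom_sum_pow_eq_ite n, range_eq_insert_zero_Icc hm, sum_insert (by simp)]
  simp_rw [← pow_mul, mul_comm]
  ring

theorem sum_rescale_mk (hζ : IsPrimitiveRoot ζ m) (hm : 0 < m) (f : ℕ → R) :
    ∑ j ∈ Icc 1 (m - 1), rescale (ζ ^ j) (PowerSeries.mk f) =
      PowerSeries.mk fun n => (if m ∣ n then m * f n else 0) - f n := by
  ext n
  simp only [map_sum, coeff_rescale, coeff_mk, ← sum_mul, hζ.sum_Icc_pow_pow hm]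
  split_ifs <;> ring

end IsPrimitiveRoot

theorem P_is_polynomial_general (ℓ m : ℕ) (hm : 2 ≤ m) (ζ : ℂ)
    (hζ : IsPrimitiveRoot ζ m) (A : Polynomial ℂ)
    (hA : (A : PowerSeries ℂ) =
      (1 - PowerSeries.X) ^ (ℓ + 1) * PowerSeries.mk (fun n => (n : ℂ) ^ ℓ)) :
    ((∑ i ∈ Finset.range m, PowerSeries.X ^ i : PowerSeries ℂ) ^ (ℓ + 1)) *
        PowerSeries.mk
          (fun n => (if m ∣ n then (m : ℂ) * (n : ℂ) ^ ℓ else 0) - (n : ℂ) ^ ℓ) =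
      ((∑ j ∈ Finset.Icc 1 (m - 1),
          (∏ i ∈ (Finset.Icc 1 (m - 1)).erase j,
            (1 - Polynomial.C (ζ ^ i) * Polynomial.X) ^ (ℓ + 1)) *
            A.comp (Polynomial.C (ζ ^ j) * Polynomial.X) : Polynomial ℂ) :
        PowerSeries ℂ) := by
  have hm0 : 0 < m := by omega
  have hA_comp (j : ℕ) : ((A.comp (Polynomial.C (ζ ^ j) * Polynomial.X) : ℂ[X]) : ℂ⟦X⟧) =
      ((1 - Polynomial.C (ζ ^ j) * Polynomial.X : ℂ[X]) : ℂ⟦X⟧) ^ (ℓ + 1) *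
        rescale (ζ ^ j) (PowerSeries.mk fun n => (n : ℂ) ^ ℓ) := by
    rw [coe_comp_C_mul_X, hA, map_mul, map_pow, map_sub, map_one, rescale_X]
    simp
  have hgeom : (∑ i ∈ range m, PowerSeries.X ^ i : ℂ⟦X⟧) =
      ∏ i ∈ Icc 1 (m - 1), ((1 - Polynomial.C (ζ ^ i) * Polynomial.X : ℂ[X]) : ℂ⟦X⟧) := by
    rw [← Polynomial.coe_prod, ← hζ.geom_sum_X_eq_prod_Icc hm0]
    simp only [Polynomial.coe_sum, Polynomial.coe_pow, Polynomial.coe_X]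
  rw [← hζ.sum_rescale_mk hm0, hgeom, mul_sum, Polynomial.coe_sum]
  refine sum_congr rfl fun j hj => ?_
  rw [← mul_prod_erase _ _ hj, Polynomial.coe_mul, hA_comp, Polynomial.coe_prod]
  simp only [Polynomial.coe_pow, mul_pow, prod_pow]
  ring

/-- For `m ≥ 2`, `ℓ ≥ 1` and `ζ` a primitive `m`-th root of unity in `ℂ`, the power
series `P(x) = (1+x+⋯+x^{m-1})^{ℓ+1}·(m·Σ_{k≥1}(mk)^ℓ x^{mk} - Σ_{k≥1} k^ℓ x^k)`
is the polynomial `Σ_{j=1}^{m-1} (∏_{1≤i≤m-1, i≠j} (1-ζ^i x)^{ℓ+1})·A_ℓ(ζ^j x)`.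
Note `m·Σ_{k≥1}(mk)^ℓ x^{mk} - Σ_{k≥1} k^ℓ x^k` has `n`-th coefficient
`(if m ∣ n then m·n^ℓ else 0) - n^ℓ`. -/
theorem P_is_polynomial (ℓ m : ℕ) (hℓ : 1 ≤ ℓ) (hm : 2 ≤ m) (ζ : ℂ)
    (hζ : IsPrimitiveRoot ζ m) (A : Polynomial ℂ)
    (hA : (A : PowerSeries ℂ) =
      (1 - PowerSeries.X) ^ (ℓ + 1) * PowerSeries.mk (fun n => (n : ℂ) ^ ℓ)) :
    ((∑ i ∈ Finset.range m, PowerSeries.X ^ i : PowerSeries ℂ) ^ (ℓ + 1)) *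
        PowerSeries.mk
          (fun n => (if m ∣ n then (m : ℂ) * (n : ℂ) ^ ℓ else 0) - (n : ℂ) ^ ℓ) =
      ((∑ j ∈ Finset.Icc 1 (m - 1),
          (∏ i ∈ (Finset.Icc 1 (m - 1)).erase j,
            (1 - Polynomial.C (ζ ^ i) * Polynomial.X) ^ (ℓ + 1)) *
            A.comp (Polynomial.C (ζ ^ j) * Polynomial.X) : Polynomial ℂ) :
        PowerSeries ℂ) :=
  P_is_polynomial_general ℓ m hm ζ hζ A hA
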